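/- D₂(x) = 0 for every real number x (viewed as an element of ℂ). In particular, with the principal-branch conventions, the term arg(1−x)·log|x| exactly cancels Im(Li₂(x)) also for x ∈ (1,∞), where Im(Li₂(x)) = −π·log x. -/

import Mathlib

/-- The dilogarithm Li₂(z) = −∫₀¹ Log(1−z·t)/t dt, with the principal branch Log. -/
noncomputable def Li2 (z : ℂ) : ℂ :=
  -∫ t in (0 : ℝ)..(1 : ℝ), Complex.log (1 - z * (t : ℂ)) / (t : ℂ)

/-- The Bloch–Wigner function D₂(z) = Im(Li₂(z)) + arg(1−z)·log|z|. -/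
noncomputable def D2 (z : ℂ) : ℝ :=
  (Li2 z).im + Complex.arg (1 - z) * Real.log ‖z‖

/-!
For real `x` the integrand `Log(1 - x t) / t` of `Li₂(x)` has real part `log |1 - x t| / t`,
integrable since it is a difference quotient at `0` away from the logarithmic singularity at
`t = 1/x`, and imaginary part `arg(1 - x t) / t`, which vanishes unless `x t > 1`, where it is
`π / t`. Hence `Im Li₂(x) = -π log x` for `x > 1` and `0` otherwise, i.e. in all cases
`Im Li₂(x) = -arg(1 - x) log |x|`, which is `D₂(x) = 0`.
-/

open Set MeasureTheory Complex

lemma Complex.log_ofReal_eq (r : ℝ) : log r = Real.log r + arg r * I := by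
  rw [log, norm_real, Real.norm_eq_abs, Real.log_abs]

lemma intervalIntegrable_log_one_sub_mul_div (x : ℝ) :
    IntervalIntegrable (fun t => Real.log (1 - x * t) / t) volume 0 1 := by
  set f : ℝ → ℝ := fun t => Real.log (1 - x * t)
  set d : ℝ := (|x| + 1)⁻¹
  have hd : 0 < d := by positivity
  have hd1 : d ≤ 1 := inv_le_one_of_one_le₀ (by linarith [abs_nonneg x])
  have hxd : ∀ t ∈ uIcc 0 d, 0 < 1 - x * t := by
    intro t ht
    rw [uIcc_of_le hd.le] at ht
    have : |x| * d < 1 := by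
      rw [← div_eq_mul_inv, div_lt_one (by positivity)]; linarith
    nlinarith [neg_abs_le x, le_abs_self x, ht.1, ht.2]
  have hdslope : ContinuousOn (dslope f 0) (uIcc 0 d) := by
    have hs : {t : ℝ | 0 < 1 - x * t} ∈ nhds (0 : ℝ) :=
      (isOpen_lt continuous_const (by fun_prop)).mem_nhds (by simp)
    refine ((continuousOn_dslope hs).2 ⟨?_, ?_⟩).mono hxd
    · exact ContinuousOn.log (by fun_prop) fun t ht => ht.ne'
    · exact DifferentiableAt.log (by fun_prop) (by simp)
  have hnear : IntervalIntegrable (fun t => f t / t) volume 0 d := by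
    refine hdslope.intervalIntegrable.congr_uIoo fun t ht => ?_
    have ht0 : t ≠ 0 := by rw [uIoo_of_le hd.le] at ht; exact ht.1.ne'
    simp [dslope_of_ne _ ht0, slope_def_field, f]
  have hfar : IntervalIntegrable (fun t => f t * t⁻¹) volume d 1 := by
    refine IntervalIntegrable.mul_continuousOn ?_ (continuousOn_inv₀.mono ?_)
    · exact MeromorphicOn.intervalIntegrable_log
        (AnalyticOnNhd.meromorphicOn fun _ _ => by fun_prop)
    · intro t ht; rw [uIcc_of_le hd1] at ht
      exact (hd.trans_le ht.1).ne'
  exact hnear.trans (by simpa only [div_eq_mul_inv] using hfar)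

lemma Complex.arg_one_sub_ofReal_of_le {y : ℝ} (hy : y ≤ 1) : arg (1 - y) = 0 := by
  rw [← ofReal_one, ← ofReal_sub]
  exact arg_ofReal_of_nonneg (sub_nonneg.2 hy)

lemma Complex.arg_one_sub_ofReal_of_lt {y : ℝ} (hy : 1 < y) : arg (1 - y) = Real.pi := by
  rw [← ofReal_one, ← ofReal_sub]
  exact arg_ofReal_of_neg (sub_neg.2 hy)

lemma arg_one_sub_mul_div_of_le {x t : ℝ} (h : x * t ≤ 1) : arg (1 - x * t) / t = 0 := by
  rw [← ofReal_mul, arg_one_sub_ofReal_of_le h, zero_div]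

lemma arg_one_sub_mul_div_of_lt {x t : ℝ} (h : 1 < x * t) :
    arg (1 - x * t) / t = Real.pi / t := by
  rw [← ofReal_mul, arg_one_sub_ofReal_of_lt h]

lemma mul_le_one_of_mem_uIoo {x t : ℝ} (hx : x ≤ 1) (ht : t ∈ uIoo 0 1) : x * t ≤ 1 := by
  rw [uIoo_of_le zero_le_one] at ht
  nlinarith [ht.1, ht.2]

section

variable {x : ℝ}

lemma eqOn_arg_one_sub_mul_div_zero (hx : 0 < x) :
    EqOn (fun t : ℝ => arg (1 - x * t) / t) 0 (uIoo 0 x⁻¹) := by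
  intro t ht
  rw [uIoo_of_le (inv_pos.2 hx).le] at ht
  exact arg_one_sub_mul_div_of_le ((lt_inv_mul_iff₀ hx).1 (by rw [mul_one]; exact ht.2)).le

lemma eqOn_arg_one_sub_mul_div_pi_div (hx : 1 < x) :
    EqOn (fun t : ℝ => arg (1 - x * t) / t) (fun t => Real.pi / t) (uIoo x⁻¹ 1) := by
  intro t ht
  rw [uIoo_of_le (inv_le_one_of_one_le₀ hx.le)] at ht
  exact arg_one_sub_mul_div_of_lt ((inv_lt_iff_one_lt_mul₀' (by linarith)).1 ht.1)

lemma intervalIntegrable_arg_one_sub_mul_div_of_le_inv (hx : 0 < x) :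
    IntervalIntegrable (fun t : ℝ => arg (1 - x * t) / t) volume 0 x⁻¹ :=
  intervalIntegrable_const.congr_uIoo (eqOn_arg_one_sub_mul_div_zero hx).symm

lemma intervalIntegrable_arg_one_sub_mul_div_of_inv_le (hx : 1 < x) :
    IntervalIntegrable (fun t : ℝ => arg (1 - x * t) / t) volume x⁻¹ 1 := by
  refine (ContinuousOn.intervalIntegrable ?_).congr_uIoo (eqOn_arg_one_sub_mul_div_pi_div hx).symm
  refine continuousOn_const.div continuousOn_id fun t ht => ?_
  rw [uIcc_of_le (inv_le_one_of_one_le₀ hx.le)] at ht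
  exact ((inv_pos.2 (by linarith)).trans_le ht.1).ne'

end

lemma intervalIntegrable_arg_one_sub_mul_div (x : ℝ) :
    IntervalIntegrable (fun t : ℝ => arg (1 - x * t) / t) volume 0 1 := by
  rcases le_or_gt x 1 with hx | hx
  · exact intervalIntegrable_const.congr_uIoo
      fun t ht => (arg_one_sub_mul_div_of_le (mul_le_one_of_mem_uIoo hx ht)).symm
  · exact (intervalIntegrable_arg_one_sub_mul_div_of_le_inv (by linarith)).trans
      (intervalIntegrable_arg_one_sub_mul_div_of_inv_le hx)

lemma integral_arg_one_sub_mul_div (x : ℝ) :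
    ∫ t in (0 : ℝ)..1, arg (1 - x * t) / t = arg (1 - x) * Real.log |x| := by
  rcases le_or_gt x 1 with hx | hx
  · rw [arg_one_sub_ofReal_of_le hx, zero_mul, intervalIntegral.integral_congr_uIoo
      fun t ht => arg_one_sub_mul_div_of_le (mul_le_one_of_mem_uIoo hx ht)]
    exact intervalIntegral.integral_zero
  have hx0 : 0 < x := by linarith
  have h0 : (0 : ℝ) ∉ uIcc x⁻¹ 1 := by
    rw [uIcc_of_le (inv_le_one_of_one_le₀ hx.le)]
    exact fun h => (inv_pos.2 hx0).not_ge h.1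
  rw [arg_one_sub_ofReal_of_lt hx, ← intervalIntegral.integral_add_adjacent_intervals
      (intervalIntegrable_arg_one_sub_mul_div_of_le_inv hx0)
      (intervalIntegrable_arg_one_sub_mul_div_of_inv_le hx),
    intervalIntegral.integral_congr_uIoo (eqOn_arg_one_sub_mul_div_zero hx0),
    intervalIntegral.integral_congr_uIoo (eqOn_arg_one_sub_mul_div_pi_div hx)]
  simp only [Pi.zero_apply, intervalIntegral.integral_zero, zero_add, div_eq_mul_inv]
  rw [intervalIntegral.integral_const_mul, integral_inv h0, one_div, inv_inv, abs_of_pos hx0]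

lemma Li2_ofReal_im (x : ℝ) : (Li2 x).im = -∫ t in (0 : ℝ)..1, arg (1 - x * t) / t := by
  have hsplit : (fun t : ℝ => Complex.log (1 - x * t) / t) =
      fun t => ((Real.log (1 - x * t) / t : ℝ) : ℂ) +
        ((arg (1 - x * t) / t : ℝ) : ℂ) * I := by
    funext t
    rw [← ofReal_one, ← ofReal_mul, ← ofReal_sub, log_ofReal_eq]
    push_cast
    ring
  have hre := intervalIntegrable_log_one_sub_mul_div x
  have him := intervalIntegrable_arg_one_sub_mul_div x
  have hint : IntervalIntegrable (fun t : ℝ => Complex.log (1 - x * t) / t) volume 0 1 := by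
    rw [hsplit]
    exact IntervalIntegrable.add ⟨hre.1.ofReal, hre.2.ofReal⟩
      ⟨him.1.ofReal.mul_const I, him.2.ofReal.mul_const I⟩
  rw [Li2, neg_im, ← RCLike.im_to_complex, ← intervalIntegral.intervalIntegral_im hint]
  simp only [RCLike.im_to_complex, div_ofReal_im, log_im]

theorem stmt_13 :
    (∀ x : ℝ, D2 (x : ℂ) = 0) ∧
    (∀ x : ℝ, 1 < x → (Li2 (x : ℂ)).im = -Real.pi * Real.log x) := by
  have hLi2 (x : ℝ) : (Li2 x).im = -(arg (1 - x) * Real.log |x|) := by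
    rw [Li2_ofReal_im, integral_arg_one_sub_mul_div]
  refine ⟨fun x => ?_, fun x hx => ?_⟩
  · rw [D2, hLi2, norm_real, Real.norm_eq_abs, neg_add_cancel]
  · rw [hLi2, arg_one_sub_ofReal_of_lt hx, abs_of_pos (by linarith), neg_mul]
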